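/- arXiv:2501.00515 — 4 statements merged into one kernel-verified Lean document; each statement's English description precedes it below -/
import Mathlib

section
/- Let d ≥ 1 and let S be a nonempty finite set of permutations of Fin d, with characteristic polynomial f_S. If it is not the case that every element of S has exactly one fixed point, then the set {x ∈ [0,1] : f_S(x) = x} contains 0 and has at most two elements. -/
open Finset Filter

/-- The number of fixed points of a permutation of `Fin d`. -/
def numFix {d : ℕ} (σ : Equiv.Perm (Fin d)) : ℕ :=
  (Finset.univ.filter fun i => σ i = i).card

/-- `D S k` is the number of permutations in `S` having exactly `k` fixed points. -/
def D {d : ℕ} (S : Finset (Equiv.Perm (Fin d))) (k : ℕ) : ℕ :=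
  (S.filter fun σ => numFix σ = k).card

/-- The characteristic polynomial of a finite set of permutations of `Fin d`:
`f_S(x) = ∑_{k=1}^{d} (D_S(k)/#S)·(1 − (1 − x)^k)`. -/
noncomputable def fS {d : ℕ} (S : Finset (Equiv.Perm (Fin d))) (x : ℝ) : ℝ :=
  ∑ k ∈ Finset.Icc 1 d, ((D S k : ℝ) / (S.card : ℝ)) * (1 - (1 - x) ^ k)

/-!
Since `1 - (1 - x)^k = x · ∑_{j<k} (1 - x)^j`, we have `f_S(x) = x · g_S(x)` with
`g_S(x) = ∑_k (D_S(k)/#S) ∑_{j<k} (1 - x)^j`, so the nonzero fixed points of `f_S` are the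
solutions of `g_S(x) = 1`. On `x ≤ 1` every summand of `g_S` is antitone, and strictly so as
soon as some permutation in `S` has at least two fixed points; then `g_S = 1` has at most one
solution. Otherwise `g_S` is the constant `D_S(1)/#S`, which is `< 1` because some element of
`S` does not have exactly one fixed point.
-/

lemma antitoneOn_geom_sum_one_sub (k : ℕ) :
    AntitoneOn (fun x : ℝ => ∑ j ∈ range k, (1 - x) ^ j) (Set.Iic 1) := fun x _ y hy hxy =>
  sum_le_sum fun j _ => pow_le_pow_left₀ (by linarith [Set.mem_Iic.mp hy]) (by linarith) j

lemma strictAntiOn_geom_sum_one_sub {k : ℕ} (hk : 2 ≤ k) :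
    StrictAntiOn (fun x : ℝ => ∑ j ∈ range k, (1 - x) ^ j) (Set.Iic 1) := fun x _ y hy hxy =>
  sum_lt_sum (fun j _ => pow_le_pow_left₀ (by linarith [Set.mem_Iic.mp hy]) (by linarith) j)
    ⟨1, mem_range.mpr hk, by simpa using hxy⟩

variable {d : ℕ} (S : Finset (Equiv.Perm (Fin d)))

noncomputable def fSQuot (x : ℝ) : ℝ :=
  ∑ k ∈ Icc 1 d, ((D S k : ℝ) / (S.card : ℝ)) * ∑ j ∈ range k, (1 - x) ^ j

lemma fS_zero : fS S 0 = 0 := by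
  simp [fS]

lemma fS_eq_mul_fSQuot (x : ℝ) : fS S x = x * fSQuot S x := by
  rw [fSQuot, mul_sum]
  refine sum_congr rfl fun k _ => ?_
  rw [← mul_neg_geom_sum (1 - x) k]
  ring

lemma D_le_card (k : ℕ) : D S k ≤ S.card :=
  card_filter_le _ _

lemma D_one_lt_card (h : ∃ σ ∈ S, numFix σ ≠ 1) : D S 1 < S.card :=
  card_lt_card (filter_ssubset.mpr h)

lemma fSQuot_strictAntiOn {k : ℕ} (hk : k ∈ Icc 2 d) (hD : D S k ≠ 0) :
    StrictAntiOn (fSQuot S) (Set.Iic 1) := by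
  obtain ⟨hk2, hkd⟩ := mem_Icc.mp hk
  have hDpos : (0 : ℝ) < D S k := by exact_mod_cast Nat.pos_of_ne_zero hD
  have hcard : (0 : ℝ) < S.card := hDpos.trans_le (by exact_mod_cast D_le_card S k)
  intro x hx y hy hxy
  refine sum_lt_sum (fun i _ => ?_) ⟨k, mem_Icc.mpr ⟨by omega, hkd⟩, ?_⟩
  · exact mul_le_mul_of_nonneg_left (antitoneOn_geom_sum_one_sub i hx hy hxy.le) (by positivity)
  · exact mul_lt_mul_of_pos_left (strictAntiOn_geom_sum_one_sub hk2 hx hy hxy) (by positivity)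

lemma fSQuot_eq_of_D_eq_zero (hd : 1 ≤ d) (h : ∀ k ∈ Icc 2 d, D S k = 0) (x : ℝ) :
    fSQuot S x = D S 1 / S.card := by
  rw [fSQuot, sum_eq_single_of_mem 1 (mem_Icc.mpr ⟨le_rfl, hd⟩)]
  · simp
  · intro k hk hk1
    rw [h k (mem_Icc.mpr ⟨by grind, (mem_Icc.mp hk).2⟩)]
    simp

lemma subsingleton_fSQuot_eq_one (hd : 1 ≤ d) (h : ∃ σ ∈ S, numFix σ ≠ 1) :
    {x ∈ Set.Iic 1 | fSQuot S x = 1}.Subsingleton := by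
  by_cases hD : ∃ k ∈ Icc 2 d, D S k ≠ 0
  · obtain ⟨k, hk, hDk⟩ := hD
    exact fun x hx y hy => (fSQuot_strictAntiOn S hk hDk).injOn hx.1 hy.1 (hx.2.trans hy.2.symm)
  · push Not at hD
    have hlt : (D S 1 : ℝ) < S.card := by exact_mod_cast D_one_lt_card S h
    intro x hx
    have : fSQuot S x < 1 := by
      rw [fSQuot_eq_of_D_eq_zero S hd hD, div_lt_one ((D S 1).cast_nonneg.trans_lt hlt)]
      exact hlt
    exact absurd hx.2 this.ne

lemma fixedPoints_subset_insert_zero :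
    {x ∈ Set.Icc (0 : ℝ) 1 | fS S x = x} ⊆ insert 0 {x ∈ Set.Iic 1 | fSQuot S x = 1} := by
  rintro x ⟨hx, hfx⟩
  rw [fS_eq_mul_fSQuot] at hfx
  rcases eq_or_ne x 0 with rfl | hx0
  · exact Set.mem_insert _ _
  · exact Or.inr ⟨hx.2, mul_left_cancel₀ hx0 (hfx.trans (mul_one x).symm)⟩

theorem stmt3_general (d : ℕ) (hd : 1 ≤ d) (S : Finset (Equiv.Perm (Fin d)))
    (h : ¬ ∀ σ ∈ S, numFix σ = 1) :
    (0 : ℝ) ∈ {x ∈ Set.Icc (0 : ℝ) 1 | fS S x = x} ∧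
    {x ∈ Set.Icc (0 : ℝ) 1 | fS S x = x}.encard ≤ 2 := by
  push Not at h
  refine ⟨⟨Set.left_mem_Icc.mpr zero_le_one, fS_zero S⟩, ?_⟩
  calc {x ∈ Set.Icc (0 : ℝ) 1 | fS S x = x}.encard
      ≤ (insert 0 {x ∈ Set.Iic 1 | fSQuot S x = 1}).encard :=
        Set.encard_le_encard (fixedPoints_subset_insert_zero S)
    _ ≤ {x ∈ Set.Iic 1 | fSQuot S x = 1}.encard + 1 := Set.encard_insert_le _ _
    _ ≤ 1 + 1 := by
        gcongr
        exact Set.encard_le_one_iff_subsingleton.mpr (subsingleton_fSQuot_eq_one S hd h)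
    _ = 2 := by norm_num

theorem stmt3 (d : ℕ) (hd : 1 ≤ d) (S : Finset (Equiv.Perm (Fin d))) (hS : S.Nonempty)
    (h : ¬ ∀ σ ∈ S, numFix σ = 1) :
    (0 : ℝ) ∈ {x ∈ Set.Icc (0 : ℝ) 1 | fS S x = x} ∧
    {x ∈ Set.Icc (0 : ℝ) 1 | fS S x = x}.encard ≤ 2 :=
  stmt3_general d hd S h
end

section
/- Let d ≥ 1 and let S be a nonempty finite set of permutations of Fin d, with characteristic polynomial f_S. Then the iterates f_S^{∘n}(1) converge to 1 as n → ∞ if and only if every element of S has at least one fixed point. -/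
open Finset Filter

/-
`f_S(1)` is the proportion of elements of `S` having a fixed point, and `f_S` maps `[0, 1]` into
`[0, f_S(1)]`. If that proportion is `1`, then `1` is a fixed point of `f_S`. Otherwise every
iterate `f_S^{∘(n+1)}(1)` is at most `f_S(1) < 1`, so the limit cannot be `1`.
-/

lemma numFix_mem_Icc_iff {d : ℕ} (σ : Equiv.Perm (Fin d)) :
    numFix σ ∈ Finset.Icc 1 d ↔ ∃ i, σ i = i := by
  have hle : numFix σ ≤ d := (card_filter_le _ _).trans_eq (card_fin d)
  rw [Finset.mem_Icc, and_iff_left hle, Nat.one_le_iff_ne_zero, Ne, numFix, card_eq_zero,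
    filter_eq_empty_iff]
  simp

lemma sum_D_Icc {d : ℕ} (S : Finset (Equiv.Perm (Fin d))) :
    ∑ k ∈ Finset.Icc 1 d, D S k = #{σ ∈ S | ∃ i, σ i = i} := by
  simp only [D, card_eq_sum_ones, sum_fiberwise_eq_sum_filter, numFix_mem_Icc_iff]

lemma fS_one {d : ℕ} (S : Finset (Equiv.Perm (Fin d))) :
    fS S 1 = #{σ ∈ S | ∃ i, σ i = i} / #S := by
  have hterm : ∀ k ∈ Finset.Icc 1 d,
      (D S k : ℝ) / #S * (1 - (1 - 1) ^ k) = (D S k : ℝ) / #S := fun k hk => by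
    rw [sub_self, zero_pow (by grind), sub_zero, mul_one]
  rw [fS, sum_congr rfl hterm, ← sum_div, ← Nat.cast_sum, sum_D_Icc]

lemma fS_one_le_one {d : ℕ} (S : Finset (Equiv.Perm (Fin d))) : fS S 1 ≤ 1 := by
  rw [fS_one]
  exact div_le_one_of_le₀ (mod_cast card_filter_le _ _) (Nat.cast_nonneg _)

lemma fS_one_eq_one_iff {d : ℕ} {S : Finset (Equiv.Perm (Fin d))} (hS : S.Nonempty) :
    fS S 1 = 1 ↔ ∀ σ ∈ S, ∃ i, σ i = i := by
  rw [fS_one, div_eq_one_iff_eq (mod_cast hS.card_pos.ne'), Nat.cast_inj, card_filter_eq_iff]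

lemma fS_nonneg {d : ℕ} (S : Finset (Equiv.Perm (Fin d))) {x : ℝ} (hx : x ∈ Set.Icc 0 1) :
    0 ≤ fS S x := by
  refine sum_nonneg fun k _ => mul_nonneg (by positivity) ?_
  have : (1 - x) ^ k ≤ 1 := pow_le_one₀ (by linarith [hx.2]) (by linarith [hx.1])
  linarith

lemma fS_le_fS_one {d : ℕ} (S : Finset (Equiv.Perm (Fin d))) {x : ℝ} (hx : x ∈ Set.Icc 0 1) :
    fS S x ≤ fS S 1 := by
  refine sum_le_sum fun k hk => mul_le_mul_of_nonneg_left ?_ (by positivity)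
  have : 0 ≤ (1 - x) ^ k := pow_nonneg (by linarith [hx.2]) k
  rw [sub_self, zero_pow (by grind)]
  linarith

lemma mapsTo_fS {d : ℕ} (S : Finset (Equiv.Perm (Fin d))) :
    Set.MapsTo (fS S) (Set.Icc 0 1) (Set.Icc 0 1) := fun _ hx =>
  ⟨fS_nonneg S hx, (fS_le_fS_one S hx).trans (fS_one_le_one S)⟩

lemma iterate_succ_fS_one_le {d : ℕ} (S : Finset (Equiv.Perm (Fin d))) (n : ℕ) :
    (fS S)^[n + 1] 1 ≤ fS S 1 := by
  rw [Function.iterate_succ_apply']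
  exact fS_le_fS_one S ((mapsTo_fS S).iterate n ⟨zero_le_one, le_rfl⟩)

theorem stmt9_general (d : ℕ) (S : Finset (Equiv.Perm (Fin d))) (hS : S.Nonempty) :
    Tendsto (fun n => (fS S)^[n] 1) atTop (nhds 1) ↔
      ∀ σ ∈ S, ∃ i, σ i = i := by
  rw [← fS_one_eq_one_iff hS]
  constructor
  · intro h
    have hlim : Tendsto (fun n => (fS S)^[n + 1] 1) atTop (nhds 1) :=
      (tendsto_add_atTop_iff_nat 1).2 h
    exact le_antisymm (fS_one_le_one S)
      (le_of_tendsto hlim (Eventually.of_forall (iterate_succ_fS_one_le S)))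
  · intro hfix
    simp only [Function.iterate_fixed hfix, tendsto_const_nhds]

theorem stmt9 (d : ℕ) (hd : 1 ≤ d) (S : Finset (Equiv.Perm (Fin d))) (hS : S.Nonempty) :
    Tendsto (fun n => (fS S)^[n] 1) atTop (nhds 1) ↔
      ∀ σ ∈ S, ∃ i, σ i = i :=
  stmt9_general d S hS
end

section
/- Let G be a finite group acting on a finite set Y, let H be a subgroup of G, and let g be an element of the normalizer of H in G. Define Y* = { y ∈ Y : ∃ h ∈ H, h • y = g⁻¹ • y }. Then Y* is invariant under the action of H, and ∑_{h ∈ H} #{ y ∈ Y : (g·h) • y = y } = |H| · m, where m is the number of orbits of H on Y that are contained in Y*. -/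
/-!
Count the pairs `(h, y)` with `(g * h) • y = y` by `y` first. The equation `h • y = g⁻¹ • y` has
`|Stab_H y|` solutions `h` when `g⁻¹ • y ∈ H • y`, that is when `y ∈ Y*`, and none otherwise.
Since `g` normalizes `H`, `Y*` is a union of `H`-orbits, and by orbit–stabilizer the stabilizer
orders add up to `|H|` over each orbit.
-/

open MulAction Finset

namespace MulAction

variable {G α : Type*} [Group G] [MulAction G α]

theorem card_stabilizer_mul_ncard_orbit (y : α) :
    Nat.card (stabilizer G y) * (orbit G y).ncard = Nat.card G := by
  rw [← index_stabilizer, Subgroup.card_mul_index]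

def smulEqEquivStabilizer (g₀ : G) (y : α) : {g : G // g • y = g₀ • y} ≃ stabilizer G y where
  toFun g := ⟨g₀⁻¹ * g, by rw [mem_stabilizer_iff, mul_smul, g.2, inv_smul_smul]⟩
  invFun s := ⟨g₀ * s, by rw [mul_smul, (mem_stabilizer_iff.mp s.2 : (s : G) • y = y)]⟩
  left_inv g := by simp
  right_inv s := by simp

theorem card_filter_smul_eq [Fintype G] (y x : α) [DecidablePred fun g : G => g • y = x]
    [Decidable (x ∈ orbit G y)] :
    #{g : G | g • y = x} = if x ∈ orbit G y then Nat.card (stabilizer G y) else 0 := by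
  split_ifs with hx
  · obtain ⟨g₀, rfl⟩ := hx
    rw [← Fintype.card_subtype, ← Nat.card_eq_fintype_card,
      Nat.card_congr (smulEqEquivStabilizer _ y)]
  · rw [card_eq_zero, filter_eq_empty_iff]
    exact fun g _ hg => hx ⟨g, hg⟩

theorem sum_card_stabilizer_eq_card_mul_ncard_orbits {s : Finset α}
    (hs : ∀ g : G, ∀ y ∈ s, g • y ∈ s) :
    ∑ y ∈ s, Nat.card (stabilizer G y) = Nat.card G * ((orbit G ·) '' (s : Set α)).ncard := by
  classical
  rw [← coe_image, Set.ncard_coe_finset, mul_comm, ← smul_eq_mul, ← sum_const, eq_comm]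
  refine sum_image' _ fun y hy => ?_
  have hfiber : (({z ∈ s | orbit G z = orbit G y} : Finset α) : Set α) = orbit G y := by
    ext z
    simp only [coe_filter, Set.mem_ofPred_eq, orbit_eq_iff]
    refine ⟨fun h => h.2, ?_⟩
    rintro ⟨g, rfl⟩
    exact ⟨hs g y hy, g, rfl⟩
  have hstab : ∀ z ∈ ({z ∈ s | orbit G z = orbit G y} : Finset α),
      Nat.card (stabilizer G z) = Nat.card (stabilizer G y) := fun z hz =>
    Nat.card_congr (stabilizerEquivStabilizerOfOrbitRel
      (orbit_eq_iff.mp (mem_filter.mp hz).2)).toEquiv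
  rw [sum_congr rfl hstab, sum_const, smul_eq_mul, ← Set.ncard_coe_finset, hfiber, mul_comm,
    card_stabilizer_mul_ncard_orbit]

end MulAction

section CosetFixedPoints

variable {G α : Type*} [Group G] [MulAction G α]

/-- The set `Y*`: as `h • y = g⁻¹ • y ↔ (g * h) • y = y`, the points fixed by some element of
the coset `g * H`. -/
def cosetFixedPoints (H : Subgroup G) (g : G) : Set α :=
  {y | ∃ h ∈ H, h • y = g⁻¹ • y}

variable {H : Subgroup G} {g : G}

theorem mem_cosetFixedPoints_iff {y : α} :
    y ∈ cosetFixedPoints H g ↔ g⁻¹ • y ∈ orbit H y :=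
  ⟨fun ⟨h, hh, hy⟩ => ⟨⟨h, hh⟩, hy⟩, fun ⟨h, hy⟩ => ⟨h, h.2, hy⟩⟩

theorem smul_mem_cosetFixedPoints (hg : g ∈ Subgroup.normalizer H) {h : G} (hh : h ∈ H) {y : α}
    (hy : y ∈ cosetFixedPoints H g) : h • y ∈ cosetFixedPoints H g := by
  obtain ⟨h', hh', hy'⟩ := hy
  have hconj : g⁻¹ * h * g ∈ H := by
    simpa [mul_assoc] using (Subgroup.mem_normalizer_iff.mp (Subgroup.inv_mem _ hg) h).mp hh
  refine ⟨g⁻¹ * h * g * h' * h⁻¹, H.mul_mem (H.mul_mem hconj hh') (H.inv_mem hh), ?_⟩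
  calc (g⁻¹ * h * g * h' * h⁻¹) • h • y = (g⁻¹ * h * g) • h' • y := by
        simp only [smul_smul, inv_mul_cancel_right]
    _ = g⁻¹ • h • y := by rw [hy', smul_smul, smul_smul, mul_inv_cancel_right]

theorem sum_card_fixed_mul_eq_sum_card_smul_eq_inv_smul [Fintype H] [Fintype α] [DecidableEq α] :
    ∑ h : H, #{y : α | (g * h) • y = y} = ∑ y : α, #{h : H | h • y = g⁻¹ • y} := by
  have hfix : ∀ (h : H) (y : α), (g * h) • y = y ↔ h • y = g⁻¹ • y := fun h y => by
    rw [mul_smul, eq_inv_smul_iff]; rfl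
  simp only [← hfix]
  exact sum_card_bipartiteAbove_eq_sum_card_bipartiteBelow (fun (h : H) (y : α) => (g * h) • y = y)

end CosetFixedPoints

theorem stmt12 (G : Type*) [Group G] [Fintype G] (Y : Type*) [Fintype Y] [DecidableEq Y]
    [MulAction G Y] (H : Subgroup G) [DecidablePred (· ∈ H)]
    (g : G) (hg : g ∈ Subgroup.normalizer H) :
    (∀ h ∈ H, ∀ y ∈ {y : Y | ∃ h' ∈ H, h' • y = g⁻¹ • y},
        h • y ∈ {y : Y | ∃ h' ∈ H, h' • y = g⁻¹ • y}) ∧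
    ∑ h : H, (Finset.univ.filter fun y : Y => (g * (h : G)) • y = y).card
      = Fintype.card H *
        Set.ncard {O : Set Y | ∃ y ∈ {y : Y | ∃ h' ∈ H, h' • y = g⁻¹ • y},
          O = MulAction.orbit H y} := by
  classical
  have hinv : ∀ h ∈ H, ∀ y ∈ (cosetFixedPoints H g : Set Y), h • y ∈ cosetFixedPoints H g :=
    fun h hh y hy => smul_mem_cosetFixedPoints hg hh hy
  refine ⟨hinv, ?_⟩
  have horbits : {O : Set Y | ∃ y ∈ (cosetFixedPoints H g : Set Y), O = orbit H y}
      = (orbit H ·) '' ↑({y | y ∈ cosetFixedPoints H g} : Finset Y) := by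
    ext O
    simp [eq_comm]
  calc ∑ h : H, #{y : Y | (g * h) • y = y}
      = ∑ y : Y, #{h : H | h • y = g⁻¹ • y} := sum_card_fixed_mul_eq_sum_card_smul_eq_inv_smul
    _ = ∑ y : Y, if g⁻¹ • y ∈ orbit H y then Nat.card (stabilizer H y) else 0 := by
        simp only [card_filter_smul_eq]
    _ = ∑ y with y ∈ cosetFixedPoints H g, Nat.card (stabilizer H y) := by
        rw [sum_filter]
        exact sum_congr rfl fun y _ => if_congr mem_cosetFixedPoints_iff.symm rfl rfl
    _ = Fintype.card H *
          {O : Set Y | ∃ y ∈ (cosetFixedPoints H g : Set Y), O = orbit H y}.ncard := by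
        rw [sum_card_stabilizer_eq_card_mul_ncard_orbits, horbits, Nat.card_eq_fintype_card]
        exact fun h y hy => mem_filter.mpr ⟨mem_univ _, hinv h h.2 y (mem_filter.mp hy).2⟩
end

section
/- Let d ≥ 1 and let S be a nonempty finite set of permutations of Fin d. Define recursively the type of depth-n portraits over S by Port(0) = a one-element type and Port(n+1) = S × (Fin d → Port(n)), and define the predicate HasFix by: every depth-0 portrait satisfies HasFix, and a depth-(n+1) portrait (s, c) satisfies HasFix iff there exists i ∈ Fin d with s(i) = i and HasFix(c(i)). Let σ_n be the cardinality of Port(n) and F_n the number of depth-n portraits satisfying HasFix. Then for every n: σ_{n+1} = #S · σ_n^d, and F_{n+1} = ∑_{k=1}^{d} D_S(k) · σ_n^{d−k} · (σ_n^k − (σ_n − F_n)^k); consequently F_{n+1}/σ_{n+1} = f_S(F_n/σ_n). -/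
open Finset

/-- Depth-`n` portraits over `S`: `Port 0` is a one-element type, and a portrait of
depth `n+1` consists of an element of `S` (the decoration at the root) together with a
depth-`n` portrait below each of the `d` children of the root. -/
def Port (d : ℕ) (S : Finset (Equiv.Perm (Fin d))) : ℕ → Type
  | 0 => PUnit
  | n + 1 => {σ : Equiv.Perm (Fin d) // σ ∈ S} × (Fin d → Port d S n)

/-- A depth-`n` portrait fixes a vertex of the `n`-th level: trivially true at depth `0`,
and at depth `n+1` it holds iff the root permutation fixes some child `i` and the
portrait below `i` fixes a vertex of its bottom level. -/
def HasFix (d : ℕ) (S : Finset (Equiv.Perm (Fin d))) : (n : ℕ) → Port d S n → Prop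
  | 0, _ => True
  | n + 1, p => ∃ i : Fin d, (p.1 : Equiv.Perm (Fin d)) i = i ∧ HasFix d S n (p.2 i)

/-- `σ_n`, the number of depth-`n` portraits. -/
noncomputable def sigma' (d : ℕ) (S : Finset (Equiv.Perm (Fin d))) (n : ℕ) : ℕ :=
  Nat.card (Port d S n)

/-- `F_n`, the number of depth-`n` portraits fixing a vertex of the `n`-th level. -/
noncomputable def F (d : ℕ) (S : Finset (Equiv.Perm (Fin d))) (n : ℕ) : ℕ :=
  Nat.card {p : Port d S n // HasFix d S n p}

/-!
A depth-`(n+1)` portrait is a root permutation `σ ∈ S` together with `d` depth-`n` portraits,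
so `σ_{n+1} = #S · σ_n ^ d`. It fails `HasFix` exactly when the portrait below each of the
`numFix σ` children fixed by `σ` fails `HasFix`, the other `d - numFix σ` children being
arbitrary: this leaves `(σ_n - F_n) ^ numFix σ · σ_n ^ (d - numFix σ)` bad portraits over `σ`.
Grouping the `σ ∈ S` by their number of fixed points gives the formula for `F_{n+1}`, and
dividing by `σ_{n+1}` term by term gives `f_S`.
-/

theorem Nat.card_subtype_add_card_subtype_not {α : Type*} [Finite α] (p : α → Prop) :
    Nat.card {a // p a} + Nat.card {a // ¬p a} = Nat.card α := by
  classical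
  rw [← Nat.card_sum, Nat.card_congr (Equiv.sumCompl p)]

theorem Nat.card_pi_subtype_forall_imp {ι α : Type*} [Fintype ι] (Q : ι → Prop)
    [DecidablePred Q] (P : α → Prop) :
    Nat.card {c : ι → α // ∀ i, Q i → P (c i)} =
      Nat.card {a // P a} ^ #{i | Q i} * Nat.card α ^ #{i | ¬Q i} := by
  have hfactor (i : ι) :
      Nat.card {a // Q i → P a} = if Q i then Nat.card {a // P a} else Nat.card α := by
    split_ifs with hi <;> simp [hi]
  rw [Nat.card_congr (Equiv.subtypePiEquivPi (p := fun i a => Q i → P a)), Nat.card_pi]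
  simp only [hfactor, prod_ite, prod_const]

-- Also true for `N = 0`, where both sides vanish because `G / 0 = 0`.
theorem pow_sub_mul_sub_pow_div_pow (N G : ℝ) {d k : ℕ} (hk : k ≤ d) :
    N ^ (d - k) * (N ^ k - (N - G) ^ k) / N ^ d = 1 - (1 - G / N) ^ k := by
  obtain ⟨j, rfl⟩ := Nat.exists_eq_add_of_le' hk
  rcases eq_or_ne N 0 with rfl | hN
  · rcases k.eq_zero_or_pos with rfl | hk0
    · simp
    · simp [hk0.ne']
  rw [Nat.add_sub_cancel, one_sub_div hN, div_pow]
  field_simp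
  ring

section Counting

variable {d : ℕ} {S : Finset (Equiv.Perm (Fin d))}

instance Port.finite : ∀ n, Finite (Port d S n)
  | 0 => inferInstanceAs (Finite PUnit)
  | n + 1 =>
    have := Port.finite n
    inferInstanceAs (Finite ({σ : Equiv.Perm (Fin d) // σ ∈ S} × (Fin d → Port d S n)))

theorem card_filter_not_fixed (σ : Equiv.Perm (Fin d)) :
    #{i | ¬σ i = i} = d - numFix σ := by
  rw [numFix, filter_not, card_sdiff_of_subset (filter_subset _ _), card_univ, Fintype.card_fin]

theorem numFix_le (σ : Equiv.Perm (Fin d)) : numFix σ ≤ d :=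
  (card_filter_le _ _).trans_eq (by simp)

theorem F_le_sigma' (n : ℕ) : F d S n ≤ sigma' d S n :=
  Finite.card_subtype_le _

theorem card_not_hasFix (n : ℕ) :
    Nat.card {p // ¬HasFix d S n p} = sigma' d S n - F d S n := by
  have := Nat.card_subtype_add_card_subtype_not (HasFix d S n)
  rw [sigma', F]
  omega

theorem sigma'_succ (n : ℕ) : sigma' d S (n + 1) = #S * sigma' d S n ^ d := by
  rw [sigma', Port, Nat.card_prod, Nat.card_fun, Nat.card_eq_finsetCard, Nat.card_fin, sigma']

theorem card_children_forall_not_hasFix (n : ℕ) (σ : Equiv.Perm (Fin d)) :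
    Nat.card {c : Fin d → Port d S n // ∀ i, σ i = i → ¬HasFix d S n (c i)} =
      (sigma' d S n - F d S n) ^ numFix σ * sigma' d S n ^ (d - numFix σ) := by
  rw [Nat.card_pi_subtype_forall_imp (fun i => σ i = i) (¬HasFix d S n ·), card_not_hasFix,
    card_filter_not_fixed, numFix, sigma']

theorem card_children_exists_hasFix (n : ℕ) (σ : Equiv.Perm (Fin d)) :
    Nat.card {c : Fin d → Port d S n // ∃ i, σ i = i ∧ HasFix d S n (c i)} =
      sigma' d S n ^ d -
        (sigma' d S n - F d S n) ^ numFix σ * sigma' d S n ^ (d - numFix σ) := by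
  have := Nat.card_subtype_add_card_subtype_not
    fun c : Fin d → Port d S n => ∃ i, σ i = i ∧ HasFix d S n (c i)
  simp only [not_exists, not_and] at this
  rw [card_children_forall_not_hasFix, Nat.card_fun, Nat.card_fin, ← sigma'] at this
  omega

theorem F_succ_eq_sum_card_children (n : ℕ) :
    F d S (n + 1) = ∑ σ ∈ S,
      Nat.card {c : Fin d → Port d S n // ∃ i, σ i = i ∧ HasFix d S n (c i)} := by
  rw [F, ← sum_coe_sort, ← Nat.card_sigma]
  exact Nat.card_congr <|
    Equiv.subtypeProdEquivSigmaSubtype fun (σ : S) (c : Fin d → Port d S n) =>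
      ∃ i, (σ : Equiv.Perm (Fin d)) i = i ∧ HasFix d S n (c i)

theorem sum_comp_numFix {M : Type*} [AddCommMonoid M] (S : Finset (Equiv.Perm (Fin d)))
    (g : ℕ → M) : ∑ σ ∈ S, g (numFix σ) = ∑ k ∈ Icc 0 d, D S k • g k := by
  rw [← sum_fiberwise_of_maps_to (t := Icc 0 d)
    fun σ _ => mem_Icc.2 ⟨Nat.zero_le _, numFix_le σ⟩]
  refine sum_congr rfl fun k _ => ?_
  rw [D, ← sum_const]
  exact sum_congr rfl fun σ hσ => by rw [(mem_filter.1 hσ).2]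

theorem F_succ (n : ℕ) :
    F d S (n + 1) = ∑ k ∈ Icc 1 d,
      D S k * sigma' d S n ^ (d - k) * (sigma' d S n ^ k - (sigma' d S n - F d S n) ^ k) := by
  set N := sigma' d S n
  set B := N - F d S n
  simp only [F_succ_eq_sum_card_children, card_children_exists_hasFix]
  rw [sum_comp_numFix S fun k => N ^ d - B ^ k * N ^ (d - k),
    ← sum_Ioc_add_eq_sum_Icc (Nat.zero_le d), ← Icc_add_one_left_eq_Ioc]
  simp only [pow_zero, one_mul, Nat.sub_zero, Nat.sub_self, smul_zero, add_zero, zero_add]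
  refine sum_congr rfl fun k hk => ?_
  obtain ⟨j, rfl⟩ := Nat.exists_eq_add_of_le' (mem_Icc.1 hk).2
  rw [Nat.add_sub_cancel, pow_add, smul_eq_mul, mul_comm (B ^ k), ← Nat.mul_sub, mul_assoc]

theorem F_succ_div_sigma'_succ (n : ℕ) :
    (F d S (n + 1) : ℝ) / (sigma' d S (n + 1) : ℝ) =
      fS S ((F d S n : ℝ) / (sigma' d S n : ℝ)) := by
  have hF : F d S n ≤ sigma' d S n := F_le_sigma' n
  rw [F_succ, sigma'_succ, fS, Nat.cast_sum, sum_div]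
  refine sum_congr rfl fun k hk => ?_
  rw [← pow_sub_mul_sub_pow_div_pow _ _ (mem_Icc.1 hk).2, div_mul_div_comm]
  push_cast [Nat.cast_sub hF, Nat.cast_sub (Nat.pow_le_pow_left (Nat.sub_le _ (F d S n)) k)]
  ring

end Counting

theorem stmt19_general (d : ℕ) (S : Finset (Equiv.Perm (Fin d)))
    (n : ℕ) :
    sigma' d S (n + 1) = S.card * (sigma' d S n) ^ d ∧
    F d S (n + 1) = ∑ k ∈ Finset.Icc 1 d,
      D S k * (sigma' d S n) ^ (d - k) *
        ((sigma' d S n) ^ k - (sigma' d S n - F d S n) ^ k) ∧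
    (F d S (n + 1) : ℝ) / (sigma' d S (n + 1) : ℝ) =
      fS S ((F d S n : ℝ) / (sigma' d S n : ℝ)) :=
  ⟨sigma'_succ n, F_succ n, F_succ_div_sigma'_succ n⟩

theorem stmt19 (d : ℕ) (hd : 1 ≤ d) (S : Finset (Equiv.Perm (Fin d))) (hS : S.Nonempty)
    (n : ℕ) :
    sigma' d S (n + 1) = S.card * (sigma' d S n) ^ d ∧
    F d S (n + 1) = ∑ k ∈ Finset.Icc 1 d,
      D S k * (sigma' d S n) ^ (d - k) *
        ((sigma' d S n) ^ k - (sigma' d S n - F d S n) ^ k) ∧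
    (F d S (n + 1) : ℝ) / (sigma' d S (n + 1) : ℝ) =
      fS S ((F d S n : ℝ) / (sigma' d S n : ℝ)) :=
  stmt19_general d S n
end
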